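/- arXiv:1705.06551 — 3 statements merged into one kernel-verified Lean document; each statement's English description precedes it below -/
import Mathlib

section
/- Let G : ℝⁿ → S^m be continuously differentiable and let r(x) := (1/2)‖P(−G(x))‖_F² be the feasibility residual. For any x ∈ ℝⁿ, Λ ∈ S^m and c > 0, setting Y_c(x,Λ) := P(Λ/c − G(x)) − Λ/c, one has r(x) ≤ (1/2)‖Y_c(x,Λ)‖_F². -/
/-!
Let `K` be the positive semidefinite cone, `Q = P(-G x)` and `B = Λ/c - G x`. For a point `p` of a
convex cone nearest to `z`, the variational inequality `⟪z - p, w - p⟫ ≤ 0` (for all `w ∈ K`)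
gives `‖p‖² ≤ ⟪z, p⟫` (take `w = 0`) and `p - z ∈ K*` (take `w = p + k`). Hence `P B - B ∈ K*`
and `‖Q‖² ≤ ⟪-G x, Q⟫ ≤ ⟪P B - B - G x, Q⟫ = ⟪Y_c, Q⟫ ≤ ‖Y_c‖ ‖Q‖`.
-/

open Matrix

attribute [local instance] Matrix.frobeniusSeminormedAddCommGroup
  Matrix.frobeniusNormedAddCommGroup Matrix.frobeniusNormedSpace

/-- The Jordan product `Y ∘ Z = (YZ + ZY)/2`. -/
noncomputable def jmul {m : ℕ} (Y Z : Matrix (Fin m) (Fin m) ℝ) : Matrix (Fin m) (Fin m) ℝ :=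
  (2⁻¹ : ℝ) • (Y * Z + Z * Y)

/-- The trace inner product `⟨Y, Z⟩ = tr (Y Z)`. -/
noncomputable def finner {m : ℕ} (Y Z : Matrix (Fin m) (Fin m) ℝ) : ℝ := (Y * Z).trace

/-- `P` is the nearest-point (Frobenius-norm) projection onto the cone of positive
semidefinite matrices, viewed on the space of real symmetric matrices. -/
def IsProjPSD {m : ℕ} (P : Matrix (Fin m) (Fin m) ℝ → Matrix (Fin m) (Fin m) ℝ) : Prop :=
  ∀ Z : Matrix (Fin m) (Fin m) ℝ, Z.IsSymm →
    (P Z).PosSemidef ∧ ∀ W : Matrix (Fin m) (Fin m) ℝ, W.PosSemidef → ‖Z - P Z‖ ≤ ‖Z - W‖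

open scoped RealInnerProductSpace

section NearestPointInCone

variable {E : Type*} [NormedAddCommGroup E] [InnerProductSpace ℝ E] {K : PointedCone ℝ E}
  {z p : E}

theorem PointedCone.inner_sub_le_zero_of_isMinOn (hp : p ∈ K) (hmin : IsMinOn (‖z - ·‖) K p)
    {w : E} (hw : w ∈ K) : ⟪z - p, w - p⟫ ≤ 0 :=
  (norm_eq_iInf_iff_real_inner_le_zero K.convex hp).mp (hmin.iInf_eq hp).symm w hw

theorem PointedCone.norm_sq_le_inner_of_isMinOn (hp : p ∈ K) (hmin : IsMinOn (‖z - ·‖) K p) :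
    ‖p‖ ^ 2 ≤ ⟪z, p⟫ := by
  have h := K.inner_sub_le_zero_of_isMinOn hp hmin K.zero_mem
  rw [zero_sub, inner_neg_right, inner_sub_left, real_inner_self_eq_norm_sq] at h
  linarith

variable [CompleteSpace E]

theorem PointedCone.sub_mem_innerDual_of_isMinOn (hp : p ∈ K) (hmin : IsMinOn (‖z - ·‖) K p) :
    p - z ∈ ProperCone.innerDual (K : Set E) := by
  refine ProperCone.mem_innerDual.mpr fun w hw => ?_
  have h := K.inner_sub_le_zero_of_isMinOn hp hmin (K.add_mem hp hw)
  rw [add_sub_cancel_left, real_inner_comm, ← neg_sub, inner_neg_right] at h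
  exact neg_nonpos.mp h

theorem PointedCone.norm_le_of_isMinOn (hp : p ∈ K) (hmin : IsMinOn (‖z - ·‖) K p) {y : E}
    (hy : y ∈ ProperCone.innerDual (K : Set E)) : ‖p‖ ≤ ‖y + z‖ := by
  have hyp : 0 ≤ ⟪y, p⟫ := real_inner_comm p y ▸ hy hp
  have key : ‖p‖ ^ 2 ≤ ‖y + z‖ * ‖p‖ := calc
    ‖p‖ ^ 2 ≤ ⟪z, p⟫ := K.norm_sq_le_inner_of_isMinOn hp hmin
    _ ≤ ⟪y + z, p⟫ := by rw [inner_add_left]; linarith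
    _ ≤ ‖y + z‖ * ‖p‖ := real_inner_le_norm _ _
  nlinarith [norm_nonneg p, norm_nonneg (y + z)]

end NearestPointInCone

namespace Matrix

def posSemidefCone (ι : Type*) [Fintype ι] : PointedCone ℝ (Matrix ι ι ℝ) where
  carrier := {A | A.PosSemidef}
  add_mem' := PosSemidef.add
  zero_mem' := PosSemidef.zero
  smul_mem' t _ hA := hA.smul t.2

variable {ι κ : Type*} [Fintype ι] [Fintype κ]

theorem frobenius_parallelogram_law (A B : Matrix ι κ ℝ) :
    ‖A + B‖ * ‖A + B‖ + ‖A - B‖ * ‖A - B‖ = 2 * (‖A‖ * ‖A‖ + ‖B‖ * ‖B‖) :=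
  parallelogram_law_with_norm_mul ℝ (WithLp.toLp 2 fun i => WithLp.toLp 2 (A i))
    (WithLp.toLp 2 fun i => WithLp.toLp 2 (B i))

/-- The polarization of the Frobenius norm, i.e. the trace inner product `tr (Aᵀ B)`. -/
noncomputable abbrev frobeniusInnerProductSpace : InnerProductSpace ℝ (Matrix ι κ ℝ) :=
  InnerProductSpace.ofNorm ℝ frobenius_parallelogram_law

end Matrix

attribute [local instance] frobeniusInnerProductSpace

section IsProjPSD

variable {m : ℕ} {P : Matrix (Fin m) (Fin m) ℝ → Matrix (Fin m) (Fin m) ℝ}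
  {Z : Matrix (Fin m) (Fin m) ℝ}

theorem IsProjPSD.mem_posSemidefCone (hP : IsProjPSD P) (hZ : Z.IsSymm) :
    P Z ∈ posSemidefCone (Fin m) :=
  (hP Z hZ).1

theorem IsProjPSD.isMinOn (hP : IsProjPSD P) (hZ : Z.IsSymm) :
    IsMinOn (‖Z - ·‖) (posSemidefCone (Fin m)) (P Z) :=
  fun _ hW => (hP Z hZ).2 _ hW

end IsProjPSD

theorem residual_le_Yc_general {n m : ℕ}
    (P : Matrix (Fin m) (Fin m) ℝ → Matrix (Fin m) (Fin m) ℝ) (hP : IsProjPSD P)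
    (G : (Fin n → ℝ) → Matrix (Fin m) (Fin m) ℝ) (hGsymm : ∀ x, (G x).IsSymm)
    (x : Fin n → ℝ) (Λ : Matrix (Fin m) (Fin m) ℝ) (hΛ : Λ.IsSymm) (c : ℝ) :
    (1 / 2) * ‖P (-(G x))‖ ^ 2 ≤ (1 / 2) * ‖P (c⁻¹ • Λ - G x) - c⁻¹ • Λ‖ ^ 2 := by
  set B := c⁻¹ • Λ - G x with hB_def
  have hB : B.IsSymm := (hΛ.smul c⁻¹).sub (hGsymm x)
  have hdual := PointedCone.sub_mem_innerDual_of_isMinOn (hP.mem_posSemidefCone hB)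
    (hP.isMinOn hB)
  have hQ : ‖P (-G x)‖ ≤ ‖P B - B + -G x‖ := PointedCone.norm_le_of_isMinOn
    (hP.mem_posSemidefCone (hGsymm x).neg) (hP.isMinOn (hGsymm x).neg) hdual
  have hY : P B - B + -G x = P B - c⁻¹ • Λ := by rw [hB_def]; abel
  rw [hY] at hQ
  gcongr

/-- `r(x) ≤ (1/2)‖Y_c(x,Λ)‖_F²` where `r(x) = (1/2)‖P(-G(x))‖_F²` and
`Y_c(x,Λ) = P(Λ/c - G(x)) - Λ/c`. -/
theorem residual_le_Yc {n m : ℕ}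
    (P : Matrix (Fin m) (Fin m) ℝ → Matrix (Fin m) (Fin m) ℝ) (hP : IsProjPSD P)
    (G : (Fin n → ℝ) → Matrix (Fin m) (Fin m) ℝ) (hGsymm : ∀ x, (G x).IsSymm)
    (hG : ContDiff ℝ 1 G)
    (x : Fin n → ℝ) (Λ : Matrix (Fin m) (Fin m) ℝ) (hΛ : Λ.IsSymm) (c : ℝ) (hc : 0 < c) :
    (1 / 2) * ‖P (-(G x))‖ ^ 2 ≤ (1 / 2) * ‖P (c⁻¹ • Λ - G x) - c⁻¹ • Λ‖ ^ 2 :=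
  residual_le_Yc_general P hP G hGsymm x Λ hΛ c
end

section
/- Let (x,Λ) be a KKT pair of the NSDP problem minimize f(x) subject to G(x) ∈ S^m_+ (i.e., ∇f(x) − ∇G(x)*Λ = 0, Λ ∘ G(x) = 0, G(x) ∈ S^m_+, Λ ∈ S^m_+). If β > 0, then P((β/2)Λ − G(x)) = (β/2)Λ, where P is the projection onto S^m_+. -/
/-!
Write `Z = (β/2)Λ - G(x)`. Since `G(x)` lies in the (self-dual) PSD cone and is orthogonal to
`(β/2)Λ` by complementarity, `Z = (β/2)Λ + (-G(x))` is the Moreau decomposition of `Z` along the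
PSD cone: for every PSD `W`, `⟪Z - (β/2)Λ, W - (β/2)Λ⟫ = -tr(G(x) W) ≤ 0`. In a Euclidean space
this variational inequality forces every nearest point of the cone to `Z` to be `(β/2)Λ`.
-/

open Matrix

attribute [local instance] Matrix.frobeniusSeminormedAddCommGroup
  Matrix.frobeniusNormedAddCommGroup Matrix.frobeniusNormedSpace

theorem eq_of_norm_sub_le_of_real_inner_sub_nonpos {F : Type*} [NormedAddCommGroup F]
    [InnerProductSpace ℝ F] {u v p : F} (hv : inner ℝ (u - v) (p - v) ≤ 0)
    (hp : ‖u - p‖ ≤ ‖u - v‖) : p = v := by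
  have hexpand : ‖u - p‖ ^ 2 = ‖u - v‖ ^ 2 - 2 * inner ℝ (u - v) (p - v) + ‖p - v‖ ^ 2 := by
    rw [← norm_sub_sq_real, sub_sub_sub_cancel_right]
  have hsq : ‖u - p‖ ^ 2 ≤ ‖u - v‖ ^ 2 := pow_le_pow_left₀ (norm_nonneg _) hp 2
  have hpv : ‖p - v‖ ^ 2 = 0 := le_antisymm (by linarith) (sq_nonneg _)
  rwa [sq_eq_zero_iff, norm_eq_zero, sub_eq_zero] at hpv

namespace Matrix

variable {m n : Type*}

/-- The Frobenius norm on `Matrix m n ℝ` is, by construction, the norm of this `L²` space. -/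
def toFrobeniusL2 (A : Matrix m n ℝ) : PiLp 2 fun _ : m => EuclideanSpace ℝ n :=
  WithLp.toLp 2 fun i => WithLp.toLp 2 (A i)

theorem toFrobeniusL2_sub (A B : Matrix m n ℝ) :
    toFrobeniusL2 (A - B) = toFrobeniusL2 A - toFrobeniusL2 B := rfl

theorem toFrobeniusL2_injective : Function.Injective (toFrobeniusL2 : Matrix m n ℝ → _) :=
  fun A B h => by
    ext i j
    exact congrFun (congrArg WithLp.ofLp (congrFun (congrArg WithLp.ofLp h) i)) j

variable [Fintype m] [Fintype n]

theorem norm_toFrobeniusL2 (A : Matrix m n ℝ) : ‖toFrobeniusL2 A‖ = ‖A‖ := rfl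

theorem inner_toFrobeniusL2 (A B : Matrix m n ℝ) :
    inner ℝ (toFrobeniusL2 A) (toFrobeniusL2 B) = (Aᵀ * B).trace := by
  simp only [toFrobeniusL2, PiLp.inner_apply, trace, diag, mul_apply, transpose_apply]
  rw [Finset.sum_comm]
  simp [mul_comm]

theorem eq_of_frobenius_norm_sub_le_of_trace_nonpos {U V P : Matrix m n ℝ}
    (hV : ((U - V)ᵀ * (P - V)).trace ≤ 0) (hP : ‖U - P‖ ≤ ‖U - V‖) : P = V := by
  refine toFrobeniusL2_injective
    (eq_of_norm_sub_le_of_real_inner_sub_nonpos (u := toFrobeniusL2 U) ?_ ?_)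
  · rwa [← toFrobeniusL2_sub, ← toFrobeniusL2_sub, inner_toFrobeniusL2]
  · rwa [← toFrobeniusL2_sub, ← toFrobeniusL2_sub, norm_toFrobeniusL2, norm_toFrobeniusL2]

end Matrix

open scoped ComplexOrder MatrixOrder in
theorem Matrix.PosSemidef.trace_mul_nonneg {𝕜 n : Type*} [RCLike 𝕜] [Fintype n]
    {A B : Matrix n n 𝕜} (hA : A.PosSemidef) (hB : B.PosSemidef) : 0 ≤ (A * B).trace := by
  classical
  obtain ⟨C, rfl⟩ := CStarAlgebra.nonneg_iff_eq_star_mul_self.mp hB.nonneg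
  rw [star_eq_conjTranspose, ← mul_assoc, trace_mul_cycle]
  exact (hA.mul_mul_conjTranspose_same C).trace_nonneg

theorem trace_jmul {m : ℕ} (Y Z : Matrix (Fin m) (Fin m) ℝ) :
    (jmul Y Z).trace = (Y * Z).trace := by
  rw [jmul, trace_smul, trace_add, trace_mul_comm Z Y, smul_eq_mul]
  ring

theorem proj_kkt_general {n m : ℕ}
    (P : Matrix (Fin m) (Fin m) ℝ → Matrix (Fin m) (Fin m) ℝ) (hP : IsProjPSD P)
    (G : (Fin n → ℝ) → Matrix (Fin m) (Fin m) ℝ)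
    (x : Fin n → ℝ) (Λ : Matrix (Fin m) (Fin m) ℝ)
    (hcomp : jmul Λ (G x) = 0) (hGx : (G x).PosSemidef) (hΛ : Λ.PosSemidef)
    (β : ℝ) (hβ : 0 < β) :
    P ((β / 2) • Λ - G x) = (β / 2) • Λ := by
  have hcΛ : ((β / 2) • Λ).PosSemidef := hΛ.smul (by positivity)
  have hGsymm : (G x).IsSymm := isHermitian_iff_isSymm.mp hGx.isHermitian
  have hΛG : (Λ * G x).trace = 0 := by rw [← trace_jmul, hcomp, trace_zero]
  obtain ⟨hPZ, hnearest⟩ := hP _ ((isHermitian_iff_isSymm.mp hcΛ.isHermitian).sub hGsymm)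
  refine eq_of_frobenius_norm_sub_le_of_trace_nonpos ?_ (hnearest _ hcΛ)
  rw [sub_sub_cancel_left, transpose_neg, hGsymm.eq, neg_mul, trace_neg, neg_nonpos, mul_sub,
    trace_sub, mul_smul_comm, trace_smul, trace_mul_comm (G x) Λ, hΛG, smul_zero, sub_zero]
  exact hGx.trace_mul_nonneg hPZ

/-- If `(x, Λ)` is a KKT pair of the NSDP problem and `β > 0`, then
`P((β/2)Λ - G(x)) = (β/2)Λ`. -/
theorem proj_kkt {n m : ℕ}
    (P : Matrix (Fin m) (Fin m) ℝ → Matrix (Fin m) (Fin m) ℝ) (hP : IsProjPSD P)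
    (f : (Fin n → ℝ) → ℝ) (hf : Differentiable ℝ f)
    (G : (Fin n → ℝ) → Matrix (Fin m) (Fin m) ℝ) (hGsymm : ∀ x, (G x).IsSymm)
    (hG : Differentiable ℝ G)
    (x : Fin n → ℝ) (Λ : Matrix (Fin m) (Fin m) ℝ)
    (hstat : ∀ v : Fin n → ℝ, fderiv ℝ f x v - finner (fderiv ℝ G x v) Λ = 0)
    (hcomp : jmul Λ (G x) = 0) (hGx : (G x).PosSemidef) (hΛ : Λ.PosSemidef)
    (β : ℝ) (hβ : 0 < β) :
    P ((β / 2) • Λ - G x) = (β / 2) • Λ :=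
  proj_kkt_general P hP G x Λ hcomp hGx hΛ β hβ
end

section
/- Let Y be an m×m symmetric positive semidefinite matrix with unit diagonal (Y_ii = 1 for all i). Then diag(lin T_{S^m_+}(Y)) = ℝ^m, i.e., the image under the diagonal map of the lineality space of the tangent cone of the PSD cone at Y is all of ℝ^m. -/
/-!
Congruence `Y ↦ (1 + tX) Y (1 + tX)ᴴ` preserves positive semidefiniteness for every real `t`, so
its velocity `XY + YXᴴ` at `t = 0` lies in the tangent cone, and so does its negative (replace
`X` by `-X`). For `X = diagonal (w / 2)` the diagonal of `XY + YXᴴ` is `(w i * Y i i)ᵢ`, which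
is `w` when `Y` has unit diagonal.
-/

open Matrix

attribute [local instance] Matrix.frobeniusSeminormedAddCommGroup
  Matrix.frobeniusNormedAddCommGroup Matrix.frobeniusNormedSpace

theorem HasDerivAt.mem_tangentConeAt {𝕜 E : Type*} [NontriviallyNormedField 𝕜]
    [NormedAddCommGroup E] [NormedSpace 𝕜 E] {γ : 𝕜 → E} {γ' : E} {t : 𝕜} {s : Set E}
    (h : HasDerivAt γ γ' t) (hγ : ∀ τ, γ τ ∈ s) : γ' ∈ tangentConeAt 𝕜 s (γ t) := by
  have := h.hasFDerivAt.hasFDerivWithinAt.mapsTo_tangent_cone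
    (by simp : (1 : 𝕜) ∈ tangentConeAt 𝕜 Set.univ t)
  rw [ContinuousLinearMap.toSpanSingleton_apply, one_smul] at this
  exact tangentConeAt_mono (Set.image_subset_iff.2 fun τ _ => hγ τ) this

namespace Matrix.PosSemidef

variable {n : Type*} [Fintype n] [DecidableEq n] {Y : Matrix n n ℝ}

theorem mul_add_mul_conjTranspose_mem_tangentConeAt (hY : Y.PosSemidef) (X : Matrix n n ℝ) :
    X * Y + Y * Xᴴ ∈ tangentConeAt ℝ {A : Matrix n n ℝ | A.PosSemidef} Y := by
  have hcongr : ∀ t : ℝ, (1 + t • X) * Y * (1 + t • X)ᴴ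
      = Y + t • (X * Y + Y * Xᴴ) + t ^ 2 • (X * Y * Xᴴ) := by
    intro t
    simp only [conjTranspose_add, conjTranspose_one, conjTranspose_smul, star_trivial, add_mul,
      mul_add, one_mul, mul_one, smul_mul_assoc, mul_smul_comm, smul_add, smul_smul, mul_assoc]
    module
  have hderiv : HasDerivAt (fun t : ℝ => Y + t • (X * Y + Y * Xᴴ) + t ^ 2 • (X * Y * Xᴴ))
      (X * Y + Y * Xᴴ) 0 := by
    refine ((((hasDerivAt_id (0 : ℝ)).smul_const (X * Y + Y * Xᴴ)).const_add Y).add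
      ((hasDerivAt_pow 2 (0 : ℝ)).smul_const (X * Y * Xᴴ))).congr_deriv ?_
    simp
  have hmem := hderiv.mem_tangentConeAt (s := {A | A.PosSemidef}) fun t => by
    simpa only [Set.mem_ofPred_eq, ← hcongr] using hY.mul_mul_conjTranspose_same (1 + t • X)
  simp only [zero_smul, add_zero, zero_pow two_ne_zero] at hmem
  -- `hmem` carries the Frobenius instances, equal to the plain ones only up to unfolding
  exact hmem

theorem neg_mul_add_mul_conjTranspose_mem_tangentConeAt (hY : Y.PosSemidef) (X : Matrix n n ℝ) :
    -(X * Y + Y * Xᴴ) ∈ tangentConeAt ℝ {A : Matrix n n ℝ | A.PosSemidef} Y := by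
  simpa [neg_add_rev, add_comm] using hY.mul_add_mul_conjTranspose_mem_tangentConeAt (-X)

end Matrix.PosSemidef

/-- For a PSD matrix `Y` with unit diagonal, the image under the diagonal map of the
lineality space of the tangent cone to the PSD cone at `Y` is all of `ℝ^m`. -/
theorem diag_lineality_tangentCone_eq_univ {m : ℕ}
    (Y : Matrix (Fin m) (Fin m) ℝ) (hY : Y.PosSemidef) (hdiag : ∀ i, Y i i = 1) :
    (fun A : Matrix (Fin m) (Fin m) ℝ => (fun i => A i i : Fin m → ℝ)) ''
        (tangentConeAt ℝ {A : Matrix (Fin m) (Fin m) ℝ | A.PosSemidef} Y ∩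
          {A | -A ∈ tangentConeAt ℝ {A : Matrix (Fin m) (Fin m) ℝ | A.PosSemidef} Y}) =
      Set.univ := by
  refine Set.eq_univ_of_forall fun w => ⟨diagonal (w / 2) * Y + Y * (diagonal (w / 2))ᴴ,
    ⟨hY.mul_add_mul_conjTranspose_mem_tangentConeAt _,
      hY.neg_mul_add_mul_conjTranspose_mem_tangentConeAt _⟩, ?_⟩
  funext i
  simp [hdiag]
end
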